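/- In a one-sided matching problem with three agents, the mechanism that selects, among all efficient matchings at a profile, the one minimizing a fixed injective index R into the natural numbers, is efficient but not group strategy-proof. Specifically, with R assigning values 1,2,3,4 to {(1,2),(3)}, {(1),(2,3)}, {(1,3),(2)}, {(1),(2),(3)} respectively, at the profile where every agent ranks 3 ≻ 1 ≻ 2 agent 2 can strictly gain by misreporting 3 ≻ 2 ≻ 1. -/

import Mathlib

/- One-sided matching framework.
Agents: a type `A`.  A matching is an involution `μ : A → A` (a fixed point is a
single agent).  Each agent `i` has a strict total order over `A`, where `i` itself
represents staying single. -/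

abbrev Pref (A : Type) := {r : A → A → Prop // IsStrictTotalOrder A r}
abbrev Profile (A : Type) := A → Pref A
abbrev Matching (A : Type) := {μ : A → A // Function.Involutive μ}

/-- `μ` Pareto dominates `η` at profile `P`. -/
def dominates {A : Type} (P : Profile A) (μ η : A → A) : Prop :=
  (∀ i, μ i = η i ∨ (P i).1 (μ i) (η i)) ∧ ∃ i, (P i).1 (μ i) (η i)

/-- A mechanism is efficient if its output is never Pareto dominated. -/
def Efficient {A : Type} (f : Profile A → Matching A) : Prop :=
  ∀ P, ¬ ∃ μ : Matching A, dominates P μ.1 (f P).1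

/-- Group strategy-proofness: no coalition `S` has a misreport making every member
weakly better off and some member strictly better off. -/
def GroupSP {A : Type} (f : Profile A → Matching A) : Prop :=
  ¬ ∃ (P P' : Profile A) (S : Set A),
      (∀ i, i ∉ S → P' i = P i) ∧
      (∀ i ∈ S, (f P').1 i = (f P).1 i ∨ (P i).1 ((f P').1 i) ((f P).1 i)) ∧
      (∃ i ∈ S, (P i).1 ((f P').1 i) ((f P).1 i))

/-- `b` is the top choice of preference `r`. -/
def TopChoice {A : Type} (r : Pref A) (b : A) : Prop := ∀ c, c ≠ b → r.1 b c

/-- The strict preference induced by a position (ranking) permutation `ρ`: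
`a` is preferred to `b` iff `a`'s position `ρ a` is smaller. -/
def prefOfPos {n : ℕ} (ρ : Fin n ≃ Fin n) : Pref (Fin n) :=
  ⟨fun a b => ρ a < ρ b, by
    refine { trichotomous := ?_, irrefl := ?_, trans := ?_ }
    · intro a b h1 h2
      exact ρ.injective (le_antisymm (not_lt.mp h2) (not_lt.mp h1))
    · intro a
      exact lt_irrefl _
    · intro a b c hab hbc
      exact lt_trans hab hbc⟩

/-- `μ` is efficient at `P`. -/
def EfficientAt {A : Type} (P : Profile A) (μ : Matching A) : Prop :=
  ¬ ∃ ν : Matching A, dominates P ν.1 μ.1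

/- The four matchings on three agents (0-indexed: agents 1,2,3 are 0,1,2). -/

/-- {(1,2),(3)} -/
def m12 : Matching (Fin 3) := ⟨⇑(Equiv.swap 0 1), fun _ => Equiv.swap_apply_self _ _ _⟩
/-- {(1),(2,3)} -/
def m23 : Matching (Fin 3) := ⟨⇑(Equiv.swap 1 2), fun _ => Equiv.swap_apply_self _ _ _⟩
/-- {(1,3),(2)} -/
def m13 : Matching (Fin 3) := ⟨⇑(Equiv.swap 0 2), fun _ => Equiv.swap_apply_self _ _ _⟩
/-- {(1),(2),(3)} -/
def mAllSingle : Matching (Fin 3) := ⟨id, fun _ => rfl⟩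

/-- The profile where every agent ranks `3 ≻ 1 ≻ 2`, i.e. `2 ≻ 0 ≻ 1`. -/
def Pstar : Profile (Fin 3) := fun _ => prefOfPos (finRotate 3)

/-- Agent 2's misreport `3 ≻ 2 ≻ 1`, i.e. `2 ≻ 1 ≻ 0`. -/
def devPref : Pref (Fin 3) := prefOfPos (Equiv.swap 0 2)

section

variable {A : Type}

theorem efficient_of_forall_efficientAt {f : Profile A → Matching A}
    (hf : ∀ P, EfficientAt P (f P)) : Efficient f :=
  hf

theorem eq_of_efficientAt_of_le {R : Matching A → ℕ} {P : Profile A} {μ ν : Matching A}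
    (hν : EfficientAt P ν ∧ ∀ η : Matching A, EfficientAt P η → R ν ≤ R η)
    (hμ : EfficientAt P μ) (hμ_unique : ∀ η, EfficientAt P η → R η ≤ R μ → η = μ) : ν = μ :=
  hμ_unique ν hν.1 (hν.2 μ hμ)

theorem not_groupSP_of_profitable_deviation [DecidableEq A] {f : Profile A → Matching A}
    (P : Profile A) (i : A) (r : Pref A)
    (hgain : (P i).1 ((f (Function.update P i r)).1 i) ((f P).1 i)) : ¬ GroupSP f := by
  refine fun hsp => hsp ⟨P, Function.update P i r, {i}, fun j hj => ?_, ?_, i, rfl, hgain⟩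
  · exact Function.update_of_ne hj r P
  · rintro j rfl
    exact Or.inr hgain

end

lemma matching_fin3_cases (μ : Matching (Fin 3)) :
    μ = m12 ∨ μ = m23 ∨ μ = m13 ∨ μ = mAllSingle := by
  obtain ⟨g, hg⟩ := μ
  simp only [← Subtype.val_inj, m12, m23, m13, mAllSingle]
  revert g
  unfold Function.Involutive
  decide

/- Agent 3 is single, its top choice, so a dominating matching leaves 3 single; the only other
such matching leaves agent 2 single, which 2 ranks last. -/
lemma efficientAt_Pstar_m12 : EfficientAt Pstar m12 := by
  simp only [EfficientAt, dominates, Subtype.exists, Function.Involutive, Pstar, prefOfPos]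
  decide

/- Agent 2 gets its reported top choice 3, and the only matching pairing 2 with 3 is this one. -/
lemma efficientAt_update_Pstar_m23 : EfficientAt (Function.update Pstar 1 devPref) m23 := by
  simp only [EfficientAt, dominates, Subtype.exists, Function.Involutive, Function.update_apply,
    apply_ite Subtype.val, ite_apply, Pstar, devPref, prefOfPos]
  decide

/- Everyone single dominates: agent 1 gets 1 instead of 2, agent 2 reports 2 ≻ 1, agent 3 is
unaffected. -/
lemma not_efficientAt_update_Pstar_m12 : ¬ EfficientAt (Function.update Pstar 1 devPref) m12 := by
  simp only [EfficientAt, dominates, Subtype.exists, Function.Involutive, Function.update_apply,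
    apply_ite Subtype.val, ite_apply, Pstar, devPref, prefOfPos]
  decide

theorem stmt19_general (R : Matching (Fin 3) → ℕ)
    (hR12 : R m12 = 1) (hR23 : R m23 = 2) (hR13 : R m13 = 3) (hRs : R mAllSingle = 4)
    (f : Profile (Fin 3) → Matching (Fin 3))
    (hf : ∀ P, EfficientAt P (f P) ∧ ∀ μ : Matching (Fin 3), EfficientAt P μ → R (f P) ≤ R μ) :
    Efficient f ∧ ¬ GroupSP f ∧
    (f Pstar).1 1 = 0 ∧
    (f (Function.update Pstar 1 devPref)).1 1 = 2 ∧
    (Pstar 1).1 2 0 := by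
  have hfPstar : f Pstar = m12 :=
    eq_of_efficientAt_of_le (hf Pstar) efficientAt_Pstar_m12 fun η _ hle => by
      rcases matching_fin3_cases η with rfl | rfl | rfl | rfl <;>
        simp only [hR12, hR23, hR13, hRs] at hle ⊢ <;> omega
  have hfdev : f (Function.update Pstar 1 devPref) = m23 :=
    eq_of_efficientAt_of_le (hf _) efficientAt_update_Pstar_m23 fun η hη hle => by
      rcases matching_fin3_cases η with rfl | rfl | rfl | rfl
      · exact absurd hη not_efficientAt_update_Pstar_m12
      all_goals simp only [hR23, hR13, hRs] at hle ⊢ <;> omega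
  have hmatch_Pstar : (f Pstar).1 1 = 0 := by rw [hfPstar]; decide
  have hmatch_dev : (f (Function.update Pstar 1 devPref)).1 1 = 2 := by rw [hfdev]; decide
  have hprefers : (Pstar 1).1 2 0 := by simp only [Pstar, prefOfPos]; decide
  refine ⟨efficient_of_forall_efficientAt fun P => (hf P).1,
    not_groupSP_of_profitable_deviation Pstar 1 devPref ?_, hmatch_Pstar, hmatch_dev, hprefers⟩
  rwa [hmatch_Pstar, hmatch_dev]

/-- The mechanism selecting, among the matchings efficient at each profile, the one
with minimal index `R` (with `R` injective and `R` of {(1,2),(3)}, {(1),(2,3)},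
{(1,3),(2)}, {(1),(2),(3)} equal to 1,2,3,4) is efficient but not group
strategy-proof: at the profile where everyone ranks `3 ≻ 1 ≻ 2` agent 2 is matched
with agent 1, while misreporting `3 ≻ 2 ≻ 1` gets agent 2 matched with agent 3,
whom agent 2 truly prefers. -/
theorem stmt19 (R : Matching (Fin 3) → ℕ) (hR : Function.Injective R)
    (hR12 : R m12 = 1) (hR23 : R m23 = 2) (hR13 : R m13 = 3) (hRs : R mAllSingle = 4)
    (f : Profile (Fin 3) → Matching (Fin 3))
    (hf : ∀ P, EfficientAt P (f P) ∧ ∀ μ : Matching (Fin 3), EfficientAt P μ → R (f P) ≤ R μ) :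
    Efficient f ∧ ¬ GroupSP f ∧
    (f Pstar).1 1 = 0 ∧
    (f (Function.update Pstar 1 devPref)).1 1 = 2 ∧
    (Pstar 1).1 2 0 :=
  stmt19_general R hR12 hR23 hR13 hRs f hf
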